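/- arXiv:1907.03439 — 2 statements merged into one kernel-verified Lean document; each statement's English description precedes it below -/
import Mathlib

section
/- Let A = (A_1,…,A_n) be a nonnegative vector in ℝ^n and D = n + A_1 + ⋯ + A_n. The Gaussian function f(x) = (2Π(A))^{−D/4} e^{−|x|^2/4} satisfies ∫_{ℝ^n_A} |f|^2 x^A dx = 1, ∫_{ℝ^n_A} |x|^2 |f|^2 x^A dx = D, and attains equality in the logarithmic Sobolev inequality with monomial weights: ∫_{ℝ^n_A} |f|^2 log(|f|^2) x^A dx = (D/2) · log( (2/(Π(A) e D)) ∫_{ℝ^n_A} |∇f|^2 x^A dx ). -/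
open MeasureTheory Real Filter

noncomputable section

/-- The positivity region `ℝ^n_A = {x : x_i > 0 whenever A_i > 0}`. -/
def monSet {ι : Type*} [Fintype ι] (A : ι → ℝ) : Set (EuclideanSpace ℝ ι) :=
  {x | ∀ i, 0 < A i → 0 < x i}

/-- The monomial weight `x^A = ∏ |x_i|^{A_i}`. -/
def monWeight {ι : Type*} [Fintype ι] (A : ι → ℝ) (x : EuclideanSpace ℝ ι) : ℝ :=
  ∏ i, |x i| ^ A i

/-- The homogeneous dimension `D = n + A_1 + ⋯ + A_n`. -/
def monDim {ι : Type*} [Fintype ι] (A : ι → ℝ) : ℝ :=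
  (Fintype.card ι : ℝ) + ∑ i, A i

/-- `k = #{i : A_i > 0}`. -/
def monK {ι : Type*} [Fintype ι] (A : ι → ℝ) : ℕ :=
  Nat.card {i : ι // 0 < A i}

/-- `Π(A) = [ (∏ Γ((A_i+1)/2)) / 2^k ]^{2/D}`. -/
def monPi {ι : Type*} [Fintype ι] (A : ι → ℝ) : ℝ :=
  ((∏ i, Gamma ((A i + 1) / 2)) / 2 ^ monK A) ^ (2 / monDim A)


/-! The weight `x^A` and the Gaussian `e^{-|x|²/2}` split into one-variable factors, and
`ℝ^n_A` is a product of half-lines (where `A_i > 0`) and lines (where `A_i = 0`). By Fubini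
every weighted Gaussian moment is therefore a product of the integrals `∫ |t|^a e^{-t²/2} dt`,
which are `2^{(a-1)/2} Γ((a+1)/2)` over the half-line and twice that over the line;
multiplying by `t²` turns `a` into `a + 2` and so multiplies the value by `a + 1`. The product
of these masses is `(2Π(A))^{D/2}`, which is exactly cancelled by the normalizing constant.
Finally `|∇f|² = |x|² f² / 4` and `log f²` is affine in `|x|²`, so all three integrals of the
statement are combinations of the mass and the second moment `D`. -/

open Set

def coordSet (a : ℝ) : Set ℝ := if 0 < a then Ioi 0 else univ

def coordMass (a : ℝ) : ℝ :=
  (if 0 < a then 1 else 2) * (2 ^ ((a - 1) / 2) * Gamma ((a + 1) / 2))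

lemma measurableSet_coordSet (a : ℝ) : MeasurableSet (coordSet a) := by
  unfold coordSet; split_ifs <;> simp

lemma integrable_comp_abs_of_integrableOn_Ioi {g : ℝ → ℝ} (hg : IntegrableOn g (Ioi 0)) :
    Integrable fun t => g |t| := by
  have hIoi : IntegrableOn (fun t => g |t|) (Ioi 0) :=
    hg.congr_fun (fun t ht => by rw [abs_of_pos ht]) measurableSet_Ioi
  rw [← integrableOn_univ, ← @Iio_union_Ici _ _ (0 : ℝ), integrableOn_union,
    integrableOn_Ici_iff_integrableOn_Ioi]
  refine ⟨?_, hIoi⟩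
  rw [← (Measure.measurePreserving_neg (volume : Measure ℝ)).integrableOn_comp_preimage
      (Homeomorph.neg ℝ).measurableEmbedding]
  simpa only [Function.comp_def, abs_neg, neg_preimage, neg_Iio, neg_zero] using hIoi

lemma setIntegral_coordSet_comp_abs (a : ℝ) (g : ℝ → ℝ) :
    ∫ t in coordSet a, g |t| = (if 0 < a then 1 else 2) * ∫ t in Ioi 0, g t := by
  unfold coordSet
  split_ifs
  · rw [one_mul]
    exact setIntegral_congr_fun measurableSet_Ioi fun t ht => by rw [abs_of_pos ht]
  · rw [Measure.restrict_univ, integral_comp_abs]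

lemma integrableOn_coordSet_comp_abs (a : ℝ) {g : ℝ → ℝ} (hg : IntegrableOn g (Ioi 0)) :
    IntegrableOn (fun t => g |t|) (coordSet a) := by
  unfold coordSet
  split_ifs
  · exact hg.congr_fun (fun t ht => by rw [abs_of_pos ht]) measurableSet_Ioi
  · exact (integrable_comp_abs_of_integrableOn_Ioi hg).integrableOn

lemma integral_Ioi_rpow_mul_exp_neg_sq_div_two {b : ℝ} (hb : -1 < b) :
    ∫ t in Ioi 0, t ^ b * exp (-t ^ 2 / 2) = 2 ^ ((b - 1) / 2) * Gamma ((b + 1) / 2) := by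
  have h : ∀ t : ℝ, exp (-t ^ 2 / 2) = exp (-(1 / 2) * t ^ (2 : ℝ)) := fun t => by
    rw [rpow_two]; ring_nf
  simp_rw [h]
  rw [integral_rpow_mul_exp_neg_mul_rpow two_pos hb one_half_pos, one_div, inv_rpow two_pos.le,
    ← rpow_neg two_pos.le, ← rpow_neg_one 2, ← rpow_add two_pos]
  ring_nf

lemma integrableOn_Ioi_rpow_mul_exp_neg_sq_div_two {b : ℝ} (hb : -1 < b) :
    IntegrableOn (fun t => t ^ b * exp (-t ^ 2 / 2)) (Ioi 0) := by
  refine (integrableOn_rpow_mul_exp_neg_mul_sq one_half_pos hb).congr_fun (fun t _ => ?_)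
    measurableSet_Ioi
  ring_nf

lemma sq_mul_abs_rpow {a : ℝ} (ha : a + 2 ≠ 0) (t : ℝ) : t ^ 2 * |t| ^ a = |t| ^ (a + 2) := by
  rw [rpow_add' (abs_nonneg t) ha, rpow_two, sq_abs, mul_comm]

lemma setIntegral_coordSet_abs_rpow_mul_exp {a : ℝ} (ha : -1 < a) :
    ∫ t in coordSet a, |t| ^ a * exp (-t ^ 2 / 2) = coordMass a := by
  have h := setIntegral_coordSet_comp_abs a fun s => s ^ a * exp (-s ^ 2 / 2)
  simp only [sq_abs] at h
  rw [h, integral_Ioi_rpow_mul_exp_neg_sq_div_two ha, coordMass]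

lemma setIntegral_coordSet_sq_mul_abs_rpow_mul_exp {a : ℝ} (ha : -1 < a) :
    ∫ t in coordSet a, t ^ 2 * (|t| ^ a * exp (-t ^ 2 / 2)) = (a + 1) * coordMass a := by
  have h := setIntegral_coordSet_comp_abs a fun s => s ^ (a + 2) * exp (-s ^ 2 / 2)
  simp only [sq_abs] at h
  simp_rw [← mul_assoc, sq_mul_abs_rpow (by linarith : a + 2 ≠ 0)]
  rw [h, integral_Ioi_rpow_mul_exp_neg_sq_div_two (by linarith), coordMass,
    show (a + 2 - 1) / 2 = (a - 1) / 2 + 1 by ring,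
    show (a + 2 + 1) / 2 = (a + 1) / 2 + 1 by ring,
    rpow_add_one two_ne_zero, Gamma_add_one (by linarith)]
  ring

lemma integrableOn_coordSet_abs_rpow_mul_exp {a : ℝ} (ha : -1 < a) :
    IntegrableOn (fun t => |t| ^ a * exp (-t ^ 2 / 2)) (coordSet a) := by
  simpa only [sq_abs] using
    integrableOn_coordSet_comp_abs a (integrableOn_Ioi_rpow_mul_exp_neg_sq_div_two ha)

lemma integrableOn_coordSet_sq_mul_abs_rpow_mul_exp {a : ℝ} (ha : -1 < a) :
    IntegrableOn (fun t => t ^ 2 * (|t| ^ a * exp (-t ^ 2 / 2))) (coordSet a) := by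
  simp_rw [← mul_assoc, sq_mul_abs_rpow (by linarith : a + 2 ≠ 0)]
  simpa only [sq_abs] using integrableOn_coordSet_comp_abs a
    (integrableOn_Ioi_rpow_mul_exp_neg_sq_div_two (by linarith : -1 < a + 2))

section Product

variable {ι : Type*} [Fintype ι] (A : ι → ℝ)

lemma toLp_preimage_monSet :
    WithLp.toLp 2 ⁻¹' monSet A = univ.pi fun i => coordSet (A i) := by
  ext y
  simp only [mem_preimage, monSet, mem_ofPred_eq, Set.mem_pi, mem_univ, true_imp_iff]
  refine forall_congr' fun i => ?_
  unfold coordSet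
  split_ifs with h <;> simp [h]

lemma measurableSet_monSet : MeasurableSet (monSet A) := by
  have h := (MeasurableSet.univ_pi fun i => measurableSet_coordSet (A i)).preimage
    (MeasurableEquiv.toLp 2 (ι → ℝ)).symm.measurable
  rwa [← toLp_preimage_monSet, ← preimage_comp] at h

lemma volume_restrict_monSet :
    volume.restrict (monSet A) =
      (Measure.pi fun i => volume.restrict (coordSet (A i))).map
        (MeasurableEquiv.toLp 2 (ι → ℝ)) := by
  rw [← (PiLp.volume_preserving_toLp ι).map_eq,
    Measure.restrict_map (PiLp.volume_preserving_toLp ι).measurable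
    (measurableSet_monSet A), toLp_preimage_monSet, volume_pi, Measure.restrict_pi_pi]
  rfl

lemma setIntegral_monSet_prod (g : ι → ℝ → ℝ) :
    ∫ x in monSet A, ∏ i, g i (x i) = ∏ i, ∫ t in coordSet (A i), g i t := by
  rw [volume_restrict_monSet, integral_map_equiv]
  exact integral_fintype_prod_eq_prod g

lemma integrableOn_monSet_prod {g : ι → ℝ → ℝ}
    (hg : ∀ i, IntegrableOn (g i) (coordSet (A i))) :
    IntegrableOn (fun x : EuclideanSpace ℝ ι => ∏ i, g i (x i)) (monSet A) := by
  rw [IntegrableOn, volume_restrict_monSet, integrable_map_equiv]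
  exact Integrable.fintype_prod hg

end Product

section Gaussian

variable {ι : Type*} [Fintype ι] {A : ι → ℝ}

lemma exp_neg_norm_sq_div_two_mul_monWeight (A : ι → ℝ) (x : EuclideanSpace ℝ ι) :
    exp (-‖x‖ ^ 2 / 2) * monWeight A x = ∏ i, |x i| ^ A i * exp (-x i ^ 2 / 2) := by
  rw [EuclideanSpace.real_norm_sq_eq, monWeight, ← Finset.sum_neg_distrib, Finset.sum_div,
    exp_sum, ← Finset.prod_mul_distrib]
  exact Finset.prod_congr rfl fun i _ => mul_comm _ _

lemma sq_mul_exp_neg_norm_sq_div_two_mul_monWeight [DecidableEq ι] (A : ι → ℝ) (j : ι)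
    (x : EuclideanSpace ℝ ι) :
    x j ^ 2 * (exp (-‖x‖ ^ 2 / 2) * monWeight A x) =
      ∏ i, (if i = j then x i ^ 2 else 1) * (|x i| ^ A i * exp (-x i ^ 2 / 2)) := by
  rw [Finset.prod_mul_distrib, Finset.prod_ite_eq', if_pos (Finset.mem_univ j),
    exp_neg_norm_sq_div_two_mul_monWeight]

lemma norm_sq_mul_eq_sum_sq_mul (x : EuclideanSpace ℝ ι) (c : ℝ) :
    ‖x‖ ^ 2 * c = ∑ j, x j ^ 2 * c := by
  rw [← Finset.sum_mul, EuclideanSpace.real_norm_sq_eq]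

variable (hA : ∀ i, -1 < A i)
include hA

lemma integrableOn_monSet_exp_mul_monWeight :
    IntegrableOn (fun x => exp (-‖x‖ ^ 2 / 2) * monWeight A x) (monSet A) := by
  simp_rw [exp_neg_norm_sq_div_two_mul_monWeight]
  exact integrableOn_monSet_prod A fun i => integrableOn_coordSet_abs_rpow_mul_exp (hA i)

lemma setIntegral_monSet_exp_mul_monWeight :
    ∫ x in monSet A, exp (-‖x‖ ^ 2 / 2) * monWeight A x = ∏ i, coordMass (A i) := by
  simp_rw [exp_neg_norm_sq_div_two_mul_monWeight]
  rw [setIntegral_monSet_prod A fun i t => |t| ^ A i * exp (-t ^ 2 / 2)]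
  exact Finset.prod_congr rfl fun i _ => setIntegral_coordSet_abs_rpow_mul_exp (hA i)

lemma integrableOn_monSet_sq_mul_exp_mul_monWeight (j : ι) :
    IntegrableOn (fun x => x j ^ 2 * (exp (-‖x‖ ^ 2 / 2) * monWeight A x)) (monSet A) := by
  classical
  simp_rw [sq_mul_exp_neg_norm_sq_div_two_mul_monWeight A j]
  refine integrableOn_monSet_prod A
    (g := fun i t => (if i = j then t ^ 2 else 1) * (|t| ^ A i * exp (-t ^ 2 / 2))) fun i => ?_
  split_ifs
  · exact integrableOn_coordSet_sq_mul_abs_rpow_mul_exp (hA i)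
  · simpa only [one_mul] using integrableOn_coordSet_abs_rpow_mul_exp (hA i)

lemma setIntegral_monSet_sq_mul_exp_mul_monWeight (j : ι) :
    ∫ x in monSet A, x j ^ 2 * (exp (-‖x‖ ^ 2 / 2) * monWeight A x) =
      (A j + 1) * ∏ i, coordMass (A i) := by
  classical
  simp_rw [sq_mul_exp_neg_norm_sq_div_two_mul_monWeight A j]
  rw [setIntegral_monSet_prod A
      fun i t => (if i = j then t ^ 2 else 1) * (|t| ^ A i * exp (-t ^ 2 / 2)),
    ← Finset.mul_prod_erase _ _ (Finset.mem_univ j),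
    ← Finset.mul_prod_erase _ _ (Finset.mem_univ j),
    ← mul_assoc]
  simp only [↓reduceIte, setIntegral_coordSet_sq_mul_abs_rpow_mul_exp (hA j)]
  congr 1
  refine Finset.prod_congr rfl fun i hi => ?_
  simpa only [Finset.ne_of_mem_erase hi, if_false, one_mul] using
    setIntegral_coordSet_abs_rpow_mul_exp (hA i)

lemma integrableOn_monSet_norm_sq_mul_exp_mul_monWeight :
    IntegrableOn (fun x => ‖x‖ ^ 2 * (exp (-‖x‖ ^ 2 / 2) * monWeight A x)) (monSet A) := by
  simp only [norm_sq_mul_eq_sum_sq_mul]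
  exact integrable_finsetSum _ fun j _ => integrableOn_monSet_sq_mul_exp_mul_monWeight hA j

lemma setIntegral_monSet_norm_sq_mul_exp_mul_monWeight :
    ∫ x in monSet A, ‖x‖ ^ 2 * (exp (-‖x‖ ^ 2 / 2) * monWeight A x) =
      monDim A * ∏ i, coordMass (A i) := by
  simp only [norm_sq_mul_eq_sum_sq_mul]
  rw [integral_finsetSum _ fun j _ => integrableOn_monSet_sq_mul_exp_mul_monWeight hA j]
  simp_rw [setIntegral_monSet_sq_mul_exp_mul_monWeight hA, ← Finset.sum_mul,
    Finset.sum_add_distrib, monDim, Finset.sum_const, Finset.card_univ, nsmul_one, add_comm]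

end Gaussian

section Normalization

variable {ι : Type*} [Fintype ι] {A : ι → ℝ}

lemma coordMass_eq (a : ℝ) :
    coordMass a = 2 ^ ((a + 1) / 2) * Gamma ((a + 1) / 2) / (if 0 < a then 2 else 1) := by
  rw [coordMass, show (a + 1) / 2 = (a - 1) / 2 + 1 by ring, rpow_add_one two_ne_zero]
  split_ifs <;> field_simp

lemma prod_coordMass (A : ι → ℝ) :
    ∏ i, coordMass (A i) =
      2 ^ (monDim A / 2) * ((∏ i, Gamma ((A i + 1) / 2)) / 2 ^ monK A) := by
  have hk : ∏ i, (if 0 < A i then (2 : ℝ) else 1) = 2 ^ monK A := by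
    rw [Finset.prod_ite, Finset.prod_const, Finset.prod_const_one, mul_one, monK,
      Nat.card_eq_fintype_card, Fintype.card_subtype]
  have hD : ∑ i, (A i + 1) / 2 = monDim A / 2 := by
    rw [← Finset.sum_div, Finset.sum_add_distrib, monDim, Finset.sum_const, Finset.card_univ,
      nsmul_one, add_comm]
  simp_rw [coordMass_eq]
  rw [Finset.prod_div_distrib, Finset.prod_mul_distrib, ← rpow_sum_of_pos two_pos, hk, hD,
    mul_div_assoc]

lemma monPi_pos (hA : ∀ i, -1 < A i) : 0 < monPi A := by
  refine rpow_pos_of_pos (div_pos (Finset.prod_pos fun i _ => ?_) (by positivity)) _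
  exact Gamma_pos_of_pos (by linarith [hA i])

lemma two_mul_monPi_rpow (hA : ∀ i, -1 < A i) (hD : monDim A ≠ 0) :
    (2 * monPi A) ^ (monDim A / 2) = ∏ i, coordMass (A i) := by
  have hQ : 0 ≤ (∏ i, Gamma ((A i + 1) / 2)) / 2 ^ monK A :=
    div_nonneg (Finset.prod_nonneg fun i _ => (Gamma_pos_of_pos (by linarith [hA i])).le)
      (by positivity)
  rw [prod_coordMass, mul_rpow two_pos.le (monPi_pos hA).le, monPi, ← rpow_mul hQ,
    show 2 / monDim A * (monDim A / 2) = 1 by field_simp, rpow_one]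

end Normalization

lemma sq_mul_exp_neg_norm_sq_div_four {E : Type*} [NormedAddCommGroup E] (C : ℝ) (x : E) :
    (C * exp (-‖x‖ ^ 2 / 4)) ^ 2 = C ^ 2 * exp (-‖x‖ ^ 2 / 2) := by
  rw [mul_pow, ← exp_nat_mul]
  ring_nf

lemma norm_fderiv_mul_exp_neg_norm_sq_div_four_sq {E : Type*} [NormedAddCommGroup E]
    [InnerProductSpace ℝ E] (C : ℝ) (x : E) :
    ‖fderiv ℝ (fun y : E => C * exp (-‖y‖ ^ 2 / 4)) x‖ ^ 2 =
      ‖x‖ ^ 2 * (C * exp (-‖x‖ ^ 2 / 4)) ^ 2 / 4 := by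
  have hnorm : HasFDerivAt (fun y : E => ‖y‖ ^ 2) (2 • innerSL ℝ x) x :=
    (hasStrictFDerivAt_norm_sq x).hasFDerivAt
  have h :
      HasFDerivAt (fun y : E => -‖y‖ ^ 2 / 4) ((-(1 : ℝ) / 4) • 2 • innerSL ℝ x) x :=
    (hnorm.const_mul _).congr_of_eventuallyEq (.of_forall fun y => by ring)
  rw [(h.exp.const_mul C).fderiv, norm_smul, norm_smul, norm_smul, RCLike.norm_nsmul ℝ,
    innerSL_apply_norm]
  simp only [Real.norm_eq_abs, mul_pow, sq_abs, nsmul_eq_mul]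
  ring

section GaussianEquality

variable {ι : Type*} [Fintype ι] {A : ι → ℝ} (hA : ∀ i, -1 < A i) (C : ℝ)
include hA

lemma setIntegral_monSet_gaussian_sq :
    ∫ x in monSet A, (C * exp (-‖x‖ ^ 2 / 4)) ^ 2 * monWeight A x =
      C ^ 2 * ∏ i, coordMass (A i) := by
  simp_rw [sq_mul_exp_neg_norm_sq_div_four, mul_assoc]
  rw [integral_const_mul, setIntegral_monSet_exp_mul_monWeight hA]

lemma setIntegral_monSet_norm_sq_mul_gaussian_sq :
    ∫ x in monSet A, ‖x‖ ^ 2 * (C * exp (-‖x‖ ^ 2 / 4)) ^ 2 * monWeight A x =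
      monDim A * (C ^ 2 * ∏ i, coordMass (A i)) := by
  have h (x : EuclideanSpace ℝ ι) :
      ‖x‖ ^ 2 * (C * exp (-‖x‖ ^ 2 / 4)) ^ 2 * monWeight A x =
        C ^ 2 * (‖x‖ ^ 2 * (exp (-‖x‖ ^ 2 / 2) * monWeight A x)) := by
    rw [sq_mul_exp_neg_norm_sq_div_four]; ring
  simp only [h]
  rw [integral_const_mul, setIntegral_monSet_norm_sq_mul_exp_mul_monWeight hA]
  ring

lemma setIntegral_monSet_norm_fderiv_gaussian_sq :
    ∫ x in monSet A,
        ‖fderiv ℝ (fun y => C * exp (-‖y‖ ^ 2 / 4)) x‖ ^ 2 * monWeight A x =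
      monDim A / 4 * (C ^ 2 * ∏ i, coordMass (A i)) := by
  have h (x : EuclideanSpace ℝ ι) :
      ‖fderiv ℝ (fun y => C * exp (-‖y‖ ^ 2 / 4)) x‖ ^ 2 * monWeight A x =
        4⁻¹ * (‖x‖ ^ 2 * (C * exp (-‖x‖ ^ 2 / 4)) ^ 2 * monWeight A x) := by
    rw [norm_fderiv_mul_exp_neg_norm_sq_div_four_sq]; ring
  simp only [h]
  rw [integral_const_mul, setIntegral_monSet_norm_sq_mul_gaussian_sq hA]
  ring

lemma setIntegral_monSet_gaussian_sq_mul_log (hC : C ≠ 0) :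
    ∫ x in monSet A, (C * exp (-‖x‖ ^ 2 / 4)) ^ 2 * log ((C * exp (-‖x‖ ^ 2 / 4)) ^ 2) *
        monWeight A x =
      (log (C ^ 2) - monDim A / 2) * (C ^ 2 * ∏ i, coordMass (A i)) := by
  have h (x : EuclideanSpace ℝ ι) :
      (C * exp (-‖x‖ ^ 2 / 4)) ^ 2 * log ((C * exp (-‖x‖ ^ 2 / 4)) ^ 2) * monWeight A x =
        C ^ 2 * log (C ^ 2) * (exp (-‖x‖ ^ 2 / 2) * monWeight A x) -
          C ^ 2 / 2 * (‖x‖ ^ 2 * (exp (-‖x‖ ^ 2 / 2) * monWeight A x)) := by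
    rw [sq_mul_exp_neg_norm_sq_div_four, log_mul (by positivity) (exp_pos _).ne', log_exp]
    ring
  simp only [h]
  rw [integral_sub ((integrableOn_monSet_exp_mul_monWeight hA).const_mul _)
      ((integrableOn_monSet_norm_sq_mul_exp_mul_monWeight hA).const_mul _),
    integral_const_mul, integral_const_mul, setIntegral_monSet_exp_mul_monWeight hA,
    setIntegral_monSet_norm_sq_mul_exp_mul_monWeight hA]
  ring

end GaussianEquality

/-- the Gaussian `f(x) = (2Π(A))^{-D/4} e^{-|x|²/4}` is normalized, has second
moment `D`, and attains equality in the logarithmic Sobolev inequality with monomial weights. -/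
theorem gaussian_extremal_logSobolev {n : ℕ} (hn : 0 < n) (A : Fin n → ℝ) (hA : ∀ i, 0 ≤ A i)
    (f : EuclideanSpace ℝ (Fin n) → ℝ)
    (hf : f = fun x => (2 * monPi A) ^ (-(monDim A) / 4) * exp (-‖x‖ ^ 2 / 4)) :
    (∫ x in monSet A, f x ^ 2 * monWeight A x) = 1 ∧
    (∫ x in monSet A, ‖x‖ ^ 2 * f x ^ 2 * monWeight A x) = monDim A ∧
    (∫ x in monSet A, f x ^ 2 * log (f x ^ 2) * monWeight A x) =
      monDim A / 2 *
        log (2 / (monPi A * exp 1 * monDim A) *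
          ∫ x in monSet A, ‖fderiv ℝ f x‖ ^ 2 * monWeight A x) := by
  subst hf
  have hA' (i : Fin n) : -1 < A i := by linarith [hA i]
  have hD : 0 < monDim A := by
    have := Finset.sum_nonneg fun i (_ : i ∈ Finset.univ) => hA i
    rw [monDim, Fintype.card_fin]
    positivity
  have hPi : 0 < monPi A := monPi_pos hA'
  set C := (2 * monPi A) ^ (-(monDim A) / 4)
  have hC2 : C ^ 2 = (2 * monPi A) ^ (-(monDim A / 2)) := by
    rw [← rpow_natCast, ← rpow_mul (by positivity)]
    ring_nf
  have hmass : C ^ 2 * ∏ i, coordMass (A i) = 1 := by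
    rw [hC2, ← two_mul_monPi_rpow hA' hD.ne', rpow_neg (by positivity),
      inv_mul_cancel₀ (by positivity)]
  beta_reduce
  rw [setIntegral_monSet_gaussian_sq hA', setIntegral_monSet_norm_sq_mul_gaussian_sq hA',
    setIntegral_monSet_gaussian_sq_mul_log hA' C (by positivity),
    setIntegral_monSet_norm_fderiv_gaussian_sq hA', hmass, hC2, log_rpow (by positivity)]
  refine ⟨rfl, mul_one _, ?_⟩
  rw [show 2 / (monPi A * exp 1 * monDim A) * (monDim A / 4 * 1) = (2 * monPi A * exp 1)⁻¹ by
      field_simp; ring,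
    log_inv, log_mul (by positivity) (exp_pos 1).ne', log_exp]
  ring
end
end

section
/- Let A = (A_1,…,A_n) be a nonnegative vector in ℝ^n, D = n + A_1 + ⋯ + A_n > 2/1 arbitrary (D > 0), and k = #{i : A_i > 0}. For l ∈ ℕ let N = ln, B = (A,…,A) ∈ ℝ^N (l copies), D_B = lD, k_B = lk, and define C_{2,N,B} = D_B^{−1/2 − 1/D_B} · ( (∏_{i=1}^n Γ((A_i+1)/2))^l / (2^{lk} Γ(1 + D_B/2)) )^{−1/D_B} · (1/(D_B − 2))^{1/2} · ( 2Γ(D_B)/Γ(D_B/2)^2 )^{1/D_B} (defined for lD > 2). Then lim_{l→∞} l · C_{2,ln,B}^2 = 2/(Π(A) e D). -/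
open MeasureTheory Real Filter

noncomputable section

/-! Write `x = l D`, `P = ∏ Γ((A_i + 1) / 2)` and `G(s) = Γ(s) ^ (1 / s) / s`. Using
`Γ(1 + x / 2) = (x / 2) Γ(x / 2)` and `(2 ^ (l k) / P ^ l) ^ (2 / x) = Π(A)⁻¹`, one gets
`l C² = 2 / (D Π(A)) · x / (x - 2) · G(x)² / G(x / 2)`. Everything thus reduces to the crude
Stirling formula `G(s) → e⁻¹` for real `s → ∞`, which follows from Stirling's formula for `n!`
since `Γ` is increasing on `[2, ∞)`, so that `Γ(⌊s⌋) ≤ Γ(s) ≤ ⌊s⌋!`. -/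

open scoped Nat

theorem tendsto_log_factorial_div_sub_log :
    Tendsto (fun n : ℕ => log n ! / n - log n) atTop (nhds (-1)) := by
  have hstirling : Tendsto (fun n : ℕ => log (Stirling.stirlingSeq n) / n) atTop (nhds 0) :=
    ((continuousAt_log (by positivity)).tendsto.comp
      Stirling.tendsto_stirlingSeq_sqrt_pi).div_atTop tendsto_natCast_atTop_atTop
  have hlog : Tendsto (fun n : ℕ => log (2 * n) / (2 * n)) atTop (nhds 0) :=
    isLittleO_log_id_atTop.tendsto_div_nhds_zero.comp
      (tendsto_natCast_atTop_atTop.const_mul_atTop two_pos)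
  have hsum := (hstirling.add hlog).sub_const 1
  rw [add_zero, zero_sub] at hsum
  refine hsum.congr' ?_
  filter_upwards [eventually_ne_atTop 0] with n hn
  have hn0 : (n : ℝ) ≠ 0 := by exact_mod_cast hn
  rw [Stirling.log_stirlingSeq_formula, log_div hn0 (exp_ne_zero 1), log_exp]
  field_simp
  ring

theorem two_le_natFloor_of_two_le {t : ℝ} (ht : 2 ≤ t) : (2 : ℝ) ≤ ⌊t⌋₊ := by
  exact_mod_cast Nat.le_floor (by exact_mod_cast ht)

theorem Gamma_natFloor_le_and_le_factorial {t : ℝ} (ht : 2 ≤ t) :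
    Gamma ⌊t⌋₊ ≤ Gamma t ∧ Gamma t ≤ ⌊t⌋₊ ! := by
  have hmono := Gamma_strictMonoOn_Ici.monotoneOn
  have hm := two_le_natFloor_of_two_le ht
  refine ⟨hmono hm ht (Nat.floor_le (by linarith)), ?_⟩
  rw [← Gamma_nat_eq_factorial]
  exact hmono ht (Set.mem_Ici.2 (by linarith)) (Nat.lt_floor_add_one t).le

theorem log_Gamma_div_sub_log_le {t : ℝ} (ht : 2 ≤ t) :
    log (Gamma t) / t - log t ≤ log (⌊t⌋₊ ! : ℝ) / ⌊t⌋₊ - log ⌊t⌋₊ := by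
  have hm := two_le_natFloor_of_two_le ht
  have hmt : (⌊t⌋₊ : ℝ) ≤ t := Nat.floor_le (by linarith)
  have hup : log (Gamma t) ≤ log (⌊t⌋₊ ! : ℝ) :=
    log_le_log (Gamma_pos_of_pos (by positivity)) (Gamma_natFloor_le_and_le_factorial ht).2
  have hdiv : log (Gamma t) / t ≤ log (⌊t⌋₊ ! : ℝ) / ⌊t⌋₊ :=
    div_le_div₀ (log_nonneg (mod_cast Nat.one_le_iff_ne_zero.2 (Nat.factorial_ne_zero _))) hup
      (by positivity) hmt
  linarith [log_le_log (by linarith) hmt]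

theorem log_factorial_natFloor_sub_le_log_Gamma_div_sub_log {t : ℝ} (ht : 2 ≤ t) :
    log (⌊t⌋₊ ! : ℝ) / ⌊t⌋₊ - log ⌊t⌋₊ - (2 * (log t / t) - (log (t + -1) - log t)) ≤
      log (Gamma t) / t - log t := by
  set m := ⌊t⌋₊
  -- `Γ(t) ≥ Γ(m) = m! / m`, and `log m! ≤ m log m` pays for replacing `1 / t` by `1 / m`.
  have hm : (2 : ℝ) ≤ m := two_le_natFloor_of_two_le ht
  have hmt : (m : ℝ) ≤ t := Nat.floor_le (by linarith)
  have htm : t < m + 1 := Nat.lt_floor_add_one t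
  have hGamma_m : Gamma m = m ! / m := by
    rw [← Gamma_nat_eq_factorial, Gamma_add_one (by positivity)]
    field_simp
  have hlow : log (m ! : ℝ) - log m ≤ log (Gamma t) := by
    rw [← log_div (by positivity) (by positivity), ← hGamma_m]
    exact log_le_log (Gamma_pos_of_pos (by positivity))
      (Gamma_natFloor_le_and_le_factorial ht).1
  have hfact_nonneg : 0 ≤ log (m ! : ℝ) :=
    log_nonneg (mod_cast Nat.one_le_iff_ne_zero.2 (Nat.factorial_ne_zero m))
  have hfact_le : log (m ! : ℝ) ≤ m * log m := by
    rw [← log_pow, ← Nat.cast_pow]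
    exact log_le_log (by positivity) (mod_cast Nat.factorial_le_pow m)
  have hkey : log (m ! : ℝ) / m ≤ (log (Gamma t) + 2 * log t) / t := by
    rw [div_le_div_iff₀ (by positivity) (by positivity)]
    nlinarith [mul_le_mul_of_nonneg_left htm.le hfact_nonneg, log_le_log (by linarith) hmt]
  rw [add_div, mul_div_assoc] at hkey
  linarith [log_le_log (by linarith : 0 < t + -1) (by linarith : t + -1 ≤ m)]

theorem tendsto_log_Gamma_div_sub_log :
    Tendsto (fun t : ℝ => log (Gamma t) / t - log t) atTop (nhds (-1)) := by
  have hfact := tendsto_log_factorial_div_sub_log.comp (tendsto_nat_floor_atTop (α := ℝ))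
  have herr : Tendsto (fun t : ℝ => 2 * (log t / t) - (log (t + -1) - log t)) atTop (nhds 0) := by
    simpa using (isLittleO_log_id_atTop.tendsto_div_nhds_zero.const_mul 2).sub
      (tendsto_log_comp_add_sub_log (-1))
  have hlow := hfact.sub herr
  rw [sub_zero] at hlow
  refine tendsto_of_tendsto_of_tendsto_of_le_of_le' hlow hfact ?_ ?_
  · filter_upwards [eventually_ge_atTop 2] with t ht
    exact log_factorial_natFloor_sub_le_log_Gamma_div_sub_log ht
  · filter_upwards [eventually_ge_atTop 2] with t ht
    exact log_Gamma_div_sub_log_le ht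

theorem tendsto_Gamma_rpow_inv_div :
    Tendsto (fun t : ℝ => Gamma t ^ t⁻¹ / t) atTop (nhds (exp (-1))) := by
  refine ((continuous_exp.tendsto _).comp tendsto_log_Gamma_div_sub_log).congr' ?_
  filter_upwards [eventually_gt_atTop 0] with t ht
  rw [Function.comp_apply, exp_sub, exp_log ht, rpow_def_of_pos (Gamma_pos_of_pos ht)]
  simp only [div_eq_mul_inv]

theorem tendsto_Gamma_ratio :
    Tendsto (fun x : ℝ => (1 - 2 / x)⁻¹ *
      ((Gamma x ^ x⁻¹ / x) ^ 2 / (Gamma (x / 2) ^ (x / 2)⁻¹ / (x / 2)))) atTop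
      (nhds (exp (-1))) := by
  have hfrac : Tendsto (fun x : ℝ => (1 - 2 / x)⁻¹) atTop (nhds 1) := by
    simpa using ((tendsto_const_nhds (x := (2 : ℝ))).div_atTop tendsto_id).const_sub 1 |>.inv₀
      (by norm_num)
  have hG := tendsto_Gamma_rpow_inv_div
  have hG_half := hG.comp (tendsto_id.atTop_div_const (two_pos : (0 : ℝ) < 2))
  have hlim := hfrac.mul ((hG.pow 2).div hG_half (exp_ne_zero _))
  rwa [one_mul, sq, mul_div_assoc, div_self (exp_ne_zero _), mul_one] at hlim

/-- `C_{2,N,B}` in terms of `D = D_B`, `Q = ∏ Γ((B_i + 1) / 2)` and `κ = k_B`. -/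
def sobolevConst (D Q : ℝ) (κ : ℕ) : ℝ :=
  D ^ (-(1 / 2 : ℝ) - 1 / D) * (Q / ((2 : ℝ) ^ κ * Gamma (1 + D / 2))) ^ (-(1 / D)) *
    (1 / (D - 2)) ^ ((1 : ℝ) / 2) * (2 * Gamma D / Gamma (D / 2) ^ 2) ^ (1 / D)

theorem sobolevConst_sq_eq {x Q : ℝ} (κ : ℕ) (hx : 2 < x) (hQ : 0 < Q) :
    sobolevConst x Q κ ^ 2 = 2 / (x - 2) * (2 ^ κ / Q) ^ (2 / x) *
      ((Gamma x ^ x⁻¹ / x) ^ 2 / (Gamma (x / 2) ^ (x / 2)⁻¹ / (x / 2))) := by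
  have hx2 : 0 < x - 2 := by linarith
  have hΓ1_eq : Gamma (1 + x / 2) = x / 2 * Gamma (x / 2) := by
    rw [add_comm, Gamma_add_one (by positivity)]
  have hlhs : 0 < sobolevConst x Q κ ^ 2 := by
    unfold sobolevConst
    positivity
  refine log_injOn_pos hlhs (Set.mem_Ioi.2 (by positivity)) ?_
  unfold sobolevConst
  simp (disch := positivity) only [log_mul, log_div, log_rpow, log_pow, log_one, hΓ1_eq]
  field_simp
  ring

theorem monDim_pos {ι : Type*} [Fintype ι] [Nonempty ι] {A : ι → ℝ} (hA : ∀ i, 0 ≤ A i) :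
    0 < monDim A := by
  unfold monDim
  have : (0 : ℝ) < Fintype.card ι := by exact_mod_cast Fintype.card_pos
  linarith [Finset.sum_nonneg fun i (_ : i ∈ Finset.univ) => hA i]

theorem pow_div_pow_rpow_eq_inv_monPi {ι : Type*} [Fintype ι] {A : ι → ℝ}
    (hP : 0 < ∏ i, Gamma ((A i + 1) / 2)) (hD : monDim A ≠ 0) {l : ℕ} (hl : l ≠ 0) :
    ((2 : ℝ) ^ (l * monK A) / (∏ i, Gamma ((A i + 1) / 2)) ^ l) ^ (2 / (l * monDim A)) =
      (monPi A)⁻¹ := by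
  have hl0 : (l : ℝ) ≠ 0 := by exact_mod_cast hl
  rw [monPi, ← inv_rpow (by positivity), inv_div, pow_mul', ← div_pow, ← rpow_natCast,
    ← rpow_mul (by positivity)]
  congr 1
  field_simp

/-- asymptotics of the sharp `L²` Sobolev constant `C_{2,ln,B}` for the `l`-fold
concatenated weight `B = (A,…,A)` (so `D_B = lD`, `k_B = lk`):
`lim_{l→∞} l C_{2,ln,B}² = 2/(Π(A) e D)`. -/
theorem tendsto_l_mul_sobolev_const_sq {n : ℕ} (hn : 0 < n) (A : Fin n → ℝ)
    (hA : ∀ i, 0 ≤ A i) :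
    Tendsto
      (fun l : ℕ =>
        (l : ℝ) *
          (((l : ℝ) * monDim A) ^ (-(1 / 2 : ℝ) - 1 / ((l : ℝ) * monDim A)) *
              ((∏ i, Gamma ((A i + 1) / 2)) ^ l /
                  ((2 : ℝ) ^ (l * monK A) * Gamma (1 + (l : ℝ) * monDim A / 2))) ^
                (-(1 / ((l : ℝ) * monDim A))) *
              (1 / ((l : ℝ) * monDim A - 2)) ^ ((1 : ℝ) / 2) *
              (2 * Gamma ((l : ℝ) * monDim A) / Gamma ((l : ℝ) * monDim A / 2) ^ 2) ^
                (1 / ((l : ℝ) * monDim A))) ^ 2)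
      atTop (nhds (2 / (monPi A * exp 1 * monDim A))) := by
  have : Nonempty (Fin n) := ⟨⟨0, hn⟩⟩
  have hD := monDim_pos hA
  have hP : 0 < ∏ i, Gamma ((A i + 1) / 2) :=
    Finset.prod_pos fun i _ => Gamma_pos_of_pos (by linarith [hA i])
  change Tendsto (fun l : ℕ => (l : ℝ) * sobolevConst (l * monDim A)
    ((∏ i, Gamma ((A i + 1) / 2)) ^ l) (l * monK A) ^ 2) _ _
  have hx : Tendsto (fun l : ℕ => (l : ℝ) * monDim A) atTop atTop :=
    tendsto_natCast_atTop_atTop.atTop_mul_const hD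
  have hlim := (tendsto_Gamma_ratio.comp hx).const_mul (2 / (monDim A * monPi A))
  have hval : 2 / (monDim A * monPi A) * exp (-1) = 2 / (monPi A * exp 1 * monDim A) := by
    rw [exp_neg]
    field_simp
  rw [hval] at hlim
  refine hlim.congr' ?_
  filter_upwards [hx.eventually_gt_atTop 2, eventually_ne_atTop 0] with l hl hl0
  rw [Function.comp_apply, sobolevConst_sq_eq _ hl (pow_pos hP l),
    pow_div_pow_rpow_eq_inv_monPi hP hD.ne' hl0]
  field_simp
end
end
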